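/- (Negligible VB mass on irregular large-L₂-error DNNs under Hellinger control.) Let 0 < κ ≤ 1, γₙ → ∞, and suppose θ satisfies: (i) E_X[(f_θ(X) − f_0(X))² 1{(f_θ(X)−f_0(X))² ≤ γₙ L₂²}] ≥ κ L₂², where L₂² = E_X(f_θ(X) − f_0(X))², and (ii) L₂² ≥ M̃ₙ ε̃ₙ² with γₙ M̃ₙ ε̃ₙ² = o(1). Then d²(P_θ, P₀) ≥ c_M · M̃ₙ ε̃ₙ² for some constant c_M > 0 (for all large n), where d²(P_θ,P₀) = E_X[1 − exp(−(f_θ(X)−f_0(X))²/(8σ²))]. -/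

import Mathlib

/-!
On the set `A = {(f - g)² ≤ γₙ L₂²}` the exponent `u = (f - g)² / (8σ²)` is at most
`a = γₙ L₂² / (8σ²)`, and concavity of `u ↦ 1 - exp (-u)` gives the chord bound
`1 - exp (-u) ≥ (1 - exp (-a)) / a * u` there. Integrating over `A` and using (i) gives
`d² ≥ κ (1 - exp (-a)) / γₙ`. Finally `1 - exp (-a) ≥ (1 - exp (-1)) min a 1`, and both `a`
and `1` dominate `γₙ M̃ₙ ε̃ₙ² / (8σ²)` for large `n`, so
`d² ≥ κ (1 - exp (-1)) M̃ₙ ε̃ₙ² / (8σ²)`.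
-/

open MeasureTheory Real Filter

namespace Real

lemma mul_one_sub_exp_neg_le {u a : ℝ} (hu : 0 ≤ u) (hua : u ≤ a) :
    u * (1 - exp (-a)) ≤ a * (1 - exp (-u)) := by
  rcases hu.eq_or_lt with rfl | hu
  · simp
  have ha : 0 < a := hu.trans_le hua
  have hconv := convexOn_exp.2 (Set.mem_univ (-a)) (Set.mem_univ 0)
    (div_nonneg hu.le ha.le) (sub_nonneg.2 ((div_le_one ha).2 hua)) (add_sub_cancel _ 1)
  have hcomb : (u / a) • -a + (1 - u / a) • (0 : ℝ) = -u := by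
    simp only [smul_eq_mul, mul_zero, add_zero]; field_simp
  rw [hcomb, smul_eq_mul, smul_eq_mul, exp_zero, mul_one] at hconv
  have := mul_le_mul_of_nonneg_left hconv ha.le
  field_simp at this
  linarith

lemma one_sub_exp_neg_le_self (u : ℝ) : 1 - exp (-u) ≤ u := by
  linarith [add_one_le_exp (-u)]

lemma one_sub_exp_neg_nonneg {u : ℝ} (hu : 0 ≤ u) : 0 ≤ 1 - exp (-u) := by
  simpa using exp_le_one_iff.2 (neg_nonpos.2 hu)

lemma one_sub_exp_neg_one_pos : 0 < 1 - exp (-1) :=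
  sub_pos.2 (exp_lt_one_iff.2 (by norm_num))

lemma one_sub_exp_neg_one_mul_min_le {a : ℝ} (ha : 0 ≤ a) :
    (1 - exp (-1)) * min a 1 ≤ 1 - exp (-a) := by
  rcases le_total a 1 with h | h
  · rw [min_eq_left h, mul_comm]
    simpa using mul_one_sub_exp_neg_le ha h
  · rw [min_eq_right h, mul_one]
    linarith [exp_le_exp.2 (neg_le_neg h)]

end Real

section Hellinger

variable {α : Type*} [MeasurableSpace α] {μ : Measure α} {D : α → ℝ} {T : ℝ}

lemma integrable_one_sub_exp_neg_div (hD : Integrable D μ) (hD0 : ∀ x, 0 ≤ D x) (hT : 0 < T) :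
    Integrable (fun x => 1 - exp (-(D x) / T)) μ := by
  refine (hD.div_const T).mono' ?_ (Eventually.of_forall fun x => ?_)
  · exact (by fun_prop : Continuous fun t : ℝ => 1 - exp (-t / T)).comp_aestronglyMeasurable
      hD.aestronglyMeasurable
  · have hDT : 0 ≤ D x / T := div_nonneg (hD0 x) hT.le
    rw [neg_div, norm_of_nonneg (one_sub_exp_neg_nonneg hDT)]
    exact one_sub_exp_neg_le_self _

lemma mul_setIntegral_le_integral_one_sub_exp_neg_div (hD : Integrable D μ)
    (hD0 : ∀ x, 0 ≤ D x) (hT : 0 < T) {b : ℝ} (hb : 0 < b) :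
    (1 - exp (-(b / T))) / b * ∫ x in {x | D x ≤ b}, D x ∂μ ≤
      ∫ x, (1 - exp (-(D x) / T)) ∂μ := by
  have hA : NullMeasurableSet {x | D x ≤ b} μ :=
    nullMeasurableSet_le hD.aemeasurable aemeasurable_const
  have hchord : ∀ x ∈ {x | D x ≤ b},
      (1 - exp (-(b / T))) / b * D x ≤ 1 - exp (-(D x) / T) := by
    intro x hx
    have := mul_one_sub_exp_neg_le (div_nonneg (hD0 x) hT.le)
      (div_le_div_of_nonneg_right (show D x ≤ b from hx) hT.le)
    rw [div_mul_eq_mul_div, div_le_iff₀ hb, neg_div]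
    rw [div_mul_eq_mul_div, div_mul_eq_mul_div, div_le_div_iff_of_pos_right hT] at this
    linarith
  calc (1 - exp (-(b / T))) / b * ∫ x in {x | D x ≤ b}, D x ∂μ
      = ∫ x in {x | D x ≤ b}, (1 - exp (-(b / T))) / b * D x ∂μ :=
        (integral_const_mul _ _).symm
    _ ≤ ∫ x in {x | D x ≤ b}, (1 - exp (-(D x) / T)) ∂μ :=
      setIntegral_mono_ae_restrict ((hD.const_mul _).integrableOn)
        (integrable_one_sub_exp_neg_div hD hD0 hT).integrableOn
        ((ae_restrict_mem₀ hA).mono hchord)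
    _ ≤ ∫ x, (1 - exp (-(D x) / T)) ∂μ :=
      setIntegral_le_integral (integrable_one_sub_exp_neg_div hD hD0 hT)
        (Eventually.of_forall fun x => by
          simpa only [neg_div, Pi.zero_apply] using
            one_sub_exp_neg_nonneg (div_nonneg (hD0 x) hT.le))

end Hellinger

theorem hellinger_lower_bound_regular_general (p : ℕ) (σ : ℝ) (hσ : 0 < σ)
    (μ : Measure (Fin p → ℝ))
    (κ : ℝ) (hκ0 : 0 < κ)
    (γ M e : ℕ → ℝ)
    (hγ : Tendsto γ atTop atTop)
    (hMe : ∀ n, 0 < M n * e n)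
    (ho : Tendsto (fun n => γ n * (M n * e n)) atTop (nhds 0)) :
    ∃ c > (0 : ℝ), ∀ᶠ n in atTop, ∀ f g : (Fin p → ℝ) → ℝ,
      Measurable f → Measurable g →
      Integrable (fun x => (f x - g x) ^ 2) μ →
      (κ * (∫ x, (f x - g x) ^ 2 ∂μ) ≤
        ∫ x in {x | (f x - g x) ^ 2 ≤ γ n * ∫ y, (f y - g y) ^ 2 ∂μ},
          (f x - g x) ^ 2 ∂μ) →
      (M n * e n ≤ ∫ x, (f x - g x) ^ 2 ∂μ) →
      c * (M n * e n) ≤ ∫ x, (1 - Real.exp (-((f x - g x) ^ 2) / (8 * σ ^ 2))) ∂μ := by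
  have hT : 0 < 8 * σ ^ 2 := by positivity
  have hexp := one_sub_exp_neg_one_pos
  refine ⟨κ * (1 - exp (-1)) / (8 * σ ^ 2), by positivity, ?_⟩
  filter_upwards [hγ.eventually_gt_atTop 0, ho.eventually (gt_mem_nhds hT)]
    with n hγn hsmall f g _ _ hint hκint hMeL
  set L := ∫ x, (f x - g x) ^ 2 ∂μ
  have hL : 0 < L := (hMe n).trans_le hMeL
  set a := γ n * L / (8 * σ ^ 2)
  have hmin : γ n * (M n * e n) / (8 * σ ^ 2) ≤ min a 1 :=
    le_min (div_le_div_of_nonneg_right (mul_le_mul_of_nonneg_left hMeL hγn.le) hT.le)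
      ((div_le_one hT).2 hsmall.le)
  calc κ * (1 - exp (-1)) / (8 * σ ^ 2) * (M n * e n)
      = κ * ((1 - exp (-1)) * (γ n * (M n * e n) / (8 * σ ^ 2))) / γ n := by
        field_simp
    _ ≤ κ * (1 - exp (-a)) / γ n := by
        gcongr
        exact (mul_le_mul_of_nonneg_left hmin hexp.le).trans
          (one_sub_exp_neg_one_mul_min_le (by positivity))
    _ = (1 - exp (-a)) / (γ n * L) * (κ * L) := by field_simp
    _ ≤ (1 - exp (-a)) / (γ n * L) *
          ∫ x in {x | (f x - g x) ^ 2 ≤ γ n * L}, (f x - g x) ^ 2 ∂μ := by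
        have := one_sub_exp_neg_nonneg (show 0 ≤ a by positivity)
        gcongr
    _ ≤ _ := mul_setIntegral_le_integral_one_sub_exp_neg_div hint (fun x => sq_nonneg _) hT
        (mul_pos hγn hL)

/-- Regular DNNs with large L₂ error have Hellinger distance bounded below: if
`E_X[(f−g)² 1{(f−g)² ≤ γₙL₂²}] ≥ κ L₂²` and `L₂² ≥ M̃ₙ ε̃ₙ²` with `γₙ → ∞` and
`γₙ M̃ₙ ε̃ₙ² = o(1)`, then `d²(P_θ,P₀) ≥ c_M M̃ₙ ε̃ₙ²` for all large `n`. -/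
theorem hellinger_lower_bound_regular (p : ℕ) (σ : ℝ) (hσ : 0 < σ)
    (μ : Measure (Fin p → ℝ)) [IsProbabilityMeasure μ]
    (κ : ℝ) (hκ0 : 0 < κ) (hκ1 : κ ≤ 1)
    (γ M e : ℕ → ℝ)
    (hγ : Tendsto γ atTop atTop)
    (hMe : ∀ n, 0 < M n * e n)
    (ho : Tendsto (fun n => γ n * (M n * e n)) atTop (nhds 0)) :
    ∃ c > (0 : ℝ), ∀ᶠ n in atTop, ∀ f g : (Fin p → ℝ) → ℝ,
      Measurable f → Measurable g →
      Integrable (fun x => (f x - g x) ^ 2) μ →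
      (κ * (∫ x, (f x - g x) ^ 2 ∂μ) ≤
        ∫ x in {x | (f x - g x) ^ 2 ≤ γ n * ∫ y, (f y - g y) ^ 2 ∂μ},
          (f x - g x) ^ 2 ∂μ) →
      (M n * e n ≤ ∫ x, (f x - g x) ^ 2 ∂μ) →
      c * (M n * e n) ≤ ∫ x, (1 - Real.exp (-((f x - g x) ^ 2) / (8 * σ ^ 2))) ∂μ :=
  hellinger_lower_bound_regular_general p σ hσ μ κ hκ0 γ M e hγ hMe ho
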